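/- Let G be a 3-uniform hypergraph with λ(G) > λ(K_{k+1}^3) and let x be an optimum weight vector. If v is a vertex whose link graph G_v has clique number at most k, then x_v < 1/(k+1). -/

import Mathlib

/-!
At an optimum `x` with `x_v > 0`, moving a little weight from `v` to the other vertices in
proportion to their weights stays in the simplex and changes `λ(G, x)` to first order by
`s (3 λ(G) - ∂λ/∂x_v)`, since the edges avoiding `v` scale cubically; hence `∂λ/∂x_v ≥ 3 λ(G)`.
Every edge through `v` gives an edge of the link graph `G_v`, so `2 ∂λ/∂x_v` is at most the
quadratic form `xᵀ A x` of `G_v` on the remaining vertices. By Motzkin–Straus this is at most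
`(1 - 1/k)(1 - x_v)²`: shifting the weight of a vertex onto a heavier non-neighbour does not
decrease the form, and once the support is a clique Cauchy–Schwarz applies. So
`6 λ(G) ≤ (1 - 1/k)(1 - x_v)²`, and `x_v ≥ 1/(k+1)` would give
`λ(G) ≤ k(k-1)/(6(k+1)²) ≤ λ(K_{k+1}³)`, the latter by the uniform weighting.
-/

open Finset

/-- A (finite) hypergraph with vertex set `verts ⊆ ℕ` and edge set `edges`. -/
structure FinHypergraph where
  verts : Finset ℕ
  edges : Finset (Finset ℕ)

/-- Well-formedness: every edge is a subset of the vertex set. -/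
def FinHypergraph.IsWf (G : FinHypergraph) : Prop := ∀ e ∈ G.edges, e ⊆ G.verts

/-- `G` is `r`-uniform: every edge has `r` vertices. -/
def FinHypergraph.IsUniform (G : FinHypergraph) (r : ℕ) : Prop := ∀ e ∈ G.edges, e.card = r

/-- The Lagrangian polynomial `λ(G, x) = ∑_{e ∈ E(G)} ∏_{i ∈ e} x_i`. -/
noncomputable def lagPoly (G : FinHypergraph) (x : ℕ → ℝ) : ℝ := ∑ e ∈ G.edges, ∏ i ∈ e, x i

/-- Feasible weight vectors: the standard simplex on the vertex set of `G`. -/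
def simplex (G : FinHypergraph) : Set (ℕ → ℝ) :=
  {x | (∀ i, 0 ≤ x i ∧ x i ≤ 1) ∧ ∑ i ∈ G.verts, x i = 1}

/-- The Lagrangian `λ(G)`: the supremum of `λ(G, x)` over the simplex. -/
noncomputable def lag (G : FinHypergraph) : ℝ := sSup (lagPoly G '' simplex G)

/-- The complete 3-graph `K_m³` on `m` vertices. -/
def completeG (m : ℕ) : FinHypergraph :=
  ⟨Finset.range m, (Finset.range m).powersetCard 3⟩

/-- The link graph `G_v = {ab : vab ∈ E(G)}` of a vertex `v`, as a simple graph. -/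
def linkGraph (G : FinHypergraph) (v : ℕ) : SimpleGraph ℕ :=
  SimpleGraph.fromRel (fun a b => ({v, a, b} : Finset ℕ) ∈ G.edges)

theorem Finset.eq_insert_pair_of_mem_offDiag_erase {α : Type*} [DecidableEq α] {e : Finset α}
    (he : #e = 3) {v : α} (hv : v ∈ e) {p : α × α} (hp : p ∈ (e.erase v).offDiag) :
    e = {v, p.1, p.2} := by
  obtain ⟨h1, h2, hne⟩ := mem_offDiag.mp hp
  have : {p.1, p.2} = e.erase v := eq_of_subset_of_card_le
    (by simp [insert_subset_iff, h1, h2]) (by rw [card_pair hne, card_erase_of_mem hv, he])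
  rw [← insert_erase hv, ← this]

namespace SimpleGraph

variable {V : Type*} (H : SimpleGraph V) [DecidableRel H.Adj]

/-- `yᵀ A y` for the adjacency matrix `A` of `H` restricted to `S`. -/
noncomputable def adjForm (S : Finset V) (y : V → ℝ) : ℝ :=
  ∑ c ∈ S, y c * ∑ d ∈ S with H.Adj c d, y d

variable {H}

theorem adjForm_eq_sum_adj_pairs (S : Finset V) (y : V → ℝ) :
    H.adjForm S y = ∑ p ∈ S ×ˢ S with H.Adj p.1 p.2, y p.1 * y p.2 := by
  simp only [adjForm, sum_filter, sum_product, mul_sum, mul_ite, mul_zero]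

theorem adjForm_le_of_isClique [DecidableEq V] {S : Finset V} {k : ℕ}
    (hS : H.IsClique (S : Set V)) (hk : #S ≤ k) (y : V → ℝ) :
    H.adjForm S y ≤ (1 - 1 / k) * (∑ c ∈ S, y c) ^ 2 := by
  have hCS : (∑ c ∈ S, y c) ^ 2 / k ≤ ∑ c ∈ S, y c ^ 2 := by
    refine div_le_of_le_mul₀ k.cast_nonneg (sum_nonneg fun _ _ => sq_nonneg _) ?_
    calc (∑ c ∈ S, y c) ^ 2 ≤ #S * ∑ c ∈ S, y c ^ 2 := sq_sum_le_card_mul_sum_sq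
      _ ≤ k * ∑ c ∈ S, y c ^ 2 := by gcongr
      _ = (∑ c ∈ S, y c ^ 2) * k := mul_comm _ _
  have hnbr (c) (hc : c ∈ S) : ∑ d ∈ S with H.Adj c d, y d = (∑ d ∈ S, y d) - y c := by
    rw [← sum_erase_eq_sub hc]
    congr 1
    ext d
    simp only [mem_filter, mem_erase]
    exact ⟨fun h => ⟨h.2.ne', h.1⟩, fun h => ⟨h.2, hS hc h.2 h.1.symm⟩⟩
  have hform : H.adjForm S y = (∑ c ∈ S, y c) ^ 2 - ∑ c ∈ S, y c ^ 2 := by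
    rw [adjForm, sum_congr rfl fun c hc => by rw [hnbr c hc], sq, sum_mul]
    simp only [mul_sub, sum_sub_distrib, sq]
  have : (1 - 1 / (k : ℝ)) * (∑ c ∈ S, y c) ^ 2
      = (∑ c ∈ S, y c) ^ 2 - (∑ c ∈ S, y c) ^ 2 / k := by ring
  linarith

theorem adjForm_erase [DecidableEq V] {S : Finset V} {y : V → ℝ} {b : V} (hb : y b = 0) :
    H.adjForm (S.erase b) y = H.adjForm S y := by
  simp only [adjForm, filter_erase]
  rw [sum_erase _ (by simp [hb])]
  exact sum_congr rfl fun c _ => by rw [sum_erase _ hb]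

theorem adjForm_add_smul (S : Finset V) (y w : V → ℝ) (t : ℝ) :
    H.adjForm S (y + t • w) = H.adjForm S y
      + 2 * t * ∑ c ∈ S, w c * ∑ d ∈ S with H.Adj c d, y d + t ^ 2 * H.adjForm S w := by
  set Y := fun c => ∑ d ∈ S with H.Adj c d, y d
  set W := fun c => ∑ d ∈ S with H.Adj c d, w d
  have hsymm : ∑ c ∈ S, y c * W c = ∑ c ∈ S, w c * Y c := by
    simp only [Y, W, sum_filter, mul_sum, mul_ite, mul_zero]
    rw [sum_comm]
    simp only [H.adj_comm, mul_comm]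
  calc H.adjForm S (y + t • w) = ∑ c ∈ S, (y c + t * w c) * (Y c + t * W c) := by
        simp only [adjForm, Pi.add_apply, Pi.smul_apply, smul_eq_mul, sum_add_distrib, ← mul_sum,
          Y, W]
    _ = ∑ c ∈ S, (y c * Y c + t * (w c * Y c) + t * (y c * W c) + t ^ 2 * (w c * W c)) :=
        sum_congr rfl fun _ _ => by ring
    _ = _ := by
        simp only [sum_add_distrib, ← mul_sum, hsymm, adjForm, Y, W]
        ring

theorem adjForm_le_adjForm_shift [DecidableEq V] {S : Finset V} {y : V → ℝ} {a b : V}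
    (ha : a ∈ S) (hb : b ∈ S) (hnadj : ¬ H.Adj a b) (hyb : 0 ≤ y b)
    (hnbr : ∑ d ∈ S with H.Adj b d, y d ≤ ∑ d ∈ S with H.Adj a d, y d) :
    H.adjForm S y ≤ H.adjForm S (y + y b • (Pi.single a 1 - Pi.single b 1)) := by
  have hpair (F : V → ℝ) :
      ∑ c ∈ S, (Pi.single a 1 - Pi.single b 1 : V → ℝ) c * F c = F a - F b := by
    simp [Pi.single_apply, sub_mul, sum_sub_distrib, ha, hb]
  have hw : H.adjForm S (Pi.single a 1 - Pi.single b 1) = 0 := by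
    rw [adjForm, hpair]
    simp [Pi.single_apply, ha, hb, hnadj, H.adj_comm b a]
  rw [adjForm_add_smul, hpair, hw]
  nlinarith

theorem adjForm_le_of_forall_isClique_card_le {k : ℕ}
    (hk : ∀ K : Finset V, H.IsClique (K : Set V) → #K ≤ k) (S : Finset V) {y : V → ℝ}
    (hy : ∀ c ∈ S, 0 ≤ y c) : H.adjForm S y ≤ (1 - 1 / k) * (∑ c ∈ S, y c) ^ 2 := by
  classical
  induction S using Finset.strongInduction generalizing y with
  | H S ih =>
  by_cases hS : H.IsClique (S : Set V)
  · exact adjForm_le_of_isClique hS (hk S hS) y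
  obtain ⟨a, ha, b, hb, hab, hnadj⟩ : ∃ a ∈ S, ∃ b ∈ S, a ≠ b ∧ ¬ H.Adj a b := by
    simpa [IsClique, Set.Pairwise] using hS
  -- Shift the weight of `b` onto the non-neighbour `a` with the heavier neighbourhood.
  wlog hnbr : ∑ d ∈ S with H.Adj b d, y d ≤ ∑ d ∈ S with H.Adj a d, y d generalizing a b
  · exact this b hb a ha hab.symm (fun h => hnadj h.symm) (le_of_not_ge hnbr)
  set y' := y + y b • (Pi.single a 1 - Pi.single b 1 : V → ℝ)
  have hy'b : y' b = 0 := by simp [y', hab.symm]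
  have hy' : ∀ c ∈ S.erase b, 0 ≤ y' c := fun c hc => by
    simp only [y', Pi.add_apply, Pi.smul_apply, Pi.sub_apply, Pi.single_apply, ne_of_mem_erase hc,
      if_false, sub_zero, smul_eq_mul]
    exact add_nonneg (hy c (mem_of_mem_erase hc)) (mul_nonneg (hy b hb) (by split_ifs <;> norm_num))
  have hsum : ∑ c ∈ S.erase b, y' c = ∑ c ∈ S, y c := by
    rw [sum_erase _ hy'b]
    simp [y', sum_add_distrib, ← mul_sum, sum_sub_distrib, Pi.single_apply, ha, hb]
  calc H.adjForm S y ≤ H.adjForm S y' := adjForm_le_adjForm_shift ha hb hnadj (hy b hb) hnbr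
    _ = H.adjForm (S.erase b) y' := (adjForm_erase hy'b).symm
    _ ≤ (1 - 1 / k) * (∑ c ∈ S, y c) ^ 2 := hsum ▸ ih _ (erase_ssubset hb) hy'

end SimpleGraph

/-- The partial derivative `∂λ(G, x)/∂x_v`. -/
noncomputable def lagPolyPartial (G : FinHypergraph) (v : ℕ) (x : ℕ → ℝ) : ℝ :=
  ∑ e ∈ G.edges with v ∈ e, ∏ i ∈ e.erase v, x i

theorem lagPoly_eq_mul_lagPolyPartial_add (G : FinHypergraph) (v : ℕ) (x : ℕ → ℝ) :
    lagPoly G x = x v * lagPolyPartial G v x + ∑ e ∈ G.edges with v ∉ e, ∏ i ∈ e, x i := by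
  rw [lagPoly, lagPolyPartial, ← sum_filter_add_sum_filter_not G.edges (v ∈ ·), mul_sum]
  congr 1
  exact sum_congr rfl fun e he => (mul_prod_erase e x (mem_filter.mp he).2).symm

theorem lagPoly_nonneg (G : FinHypergraph) {x : ℕ → ℝ} (hx : ∀ i, 0 ≤ x i) : 0 ≤ lagPoly G x :=
  sum_nonneg fun _ _ => prod_nonneg fun i _ => hx i

theorem lagPoly_le_lag {G : FinHypergraph} {y : ℕ → ℝ} (hy : y ∈ simplex G) :
    lagPoly G y ≤ lag G := by
  refine le_csSup ⟨#G.edges, ?_⟩ ⟨y, hy, rfl⟩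
  rintro _ ⟨z, hz, rfl⟩
  calc lagPoly G z ≤ ∑ _e ∈ G.edges, (1 : ℝ) :=
        sum_le_sum fun e _ => prod_le_one (fun i _ => (hz.1 i).1) fun i _ => (hz.1 i).2
    _ = #G.edges := by simp

theorem lagPoly_congr {G : FinHypergraph} (hwf : G.IsWf) {x y : ℕ → ℝ}
    (h : ∀ i ∈ G.verts, x i = y i) : lagPoly G x = lagPoly G y :=
  sum_congr rfl fun e he => prod_congr rfl fun i hi => h i (hwf e he hi)

theorem lagPoly_le_lag_of_nonneg {G : FinHypergraph} (hwf : G.IsWf) {y : ℕ → ℝ}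
    (hy : ∀ i ∈ G.verts, 0 ≤ y i) (hsum : ∑ i ∈ G.verts, y i = 1) : lagPoly G y ≤ lag G := by
  set y' : ℕ → ℝ := fun i => if i ∈ G.verts then y i else 0
  have hy' : y' ∈ simplex G := by
    refine ⟨fun i => ?_, by simpa [y'] using hsum⟩
    by_cases hi : i ∈ G.verts
    · simp only [y', if_pos hi]
      exact ⟨hy i hi, hsum ▸ single_le_sum hy hi⟩
    · simp [y', hi]
  calc lagPoly G y = lagPoly G y' := lagPoly_congr hwf fun i hi => by simp [y', hi]
    _ ≤ lag G := lagPoly_le_lag hy'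

theorem lagPoly_update_smul {G : FinHypergraph} (hu : G.IsUniform 3) (x : ℕ → ℝ) (v : ℕ)
    (c b : ℝ) : lagPoly G (Function.update (c • x) v b)
      = c ^ 2 * (b - c * x v) * lagPolyPartial G v x + c ^ 3 * lagPoly G x := by
  set z := Function.update (c • x) v b
  have hz : ∀ i ≠ v, z i = c * x i := fun i hi => by simp [z, hi]
  have hpartial : lagPolyPartial G v z = c ^ 2 * lagPolyPartial G v x := by
    rw [lagPolyPartial, lagPolyPartial, mul_sum]
    refine sum_congr rfl fun e he => ?_
    obtain ⟨heE, hve⟩ := mem_filter.mp he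
    rw [prod_congr rfl fun i hi => hz i (ne_of_mem_erase hi), prod_mul_distrib, prod_const,
      card_erase_of_mem hve, hu e heE]
  have hrest : ∑ e ∈ G.edges with v ∉ e, ∏ i ∈ e, z i
      = c ^ 3 * ∑ e ∈ G.edges with v ∉ e, ∏ i ∈ e, x i := by
    rw [mul_sum]
    refine sum_congr rfl fun e he => ?_
    obtain ⟨heE, hve⟩ := mem_filter.mp he
    rw [prod_congr rfl fun i hi => hz i (ne_of_mem_of_not_mem hi hve), prod_mul_distrib,
      prod_const, hu e heE]
  rw [lagPoly_eq_mul_lagPolyPartial_add G v z, lagPoly_eq_mul_lagPolyPartial_add G v x, hpartial,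
    hrest, show z v = b by simp [z]]
  ring

open Filter Topology in
theorem three_mul_lagPoly_le_lagPolyPartial {G : FinHypergraph} (hwf : G.IsWf)
    (hu : G.IsUniform 3) {x : ℕ → ℝ} (hx : x ∈ simplex G) (hopt : lagPoly G x = lag G) {v : ℕ}
    (hv : v ∈ G.verts) (hxv : 0 < x v) : 3 * lagPoly G x ≤ lagPolyPartial G v x := by
  set L := lagPoly G x
  set P := lagPolyPartial G v x
  have hL : 0 ≤ L := lagPoly_nonneg G fun i => (hx.1 i).1
  have hbound : ∀ s ∈ Set.Ioc (0 : ℝ) (x v), 3 * L ≤ (1 + s) ^ 2 * P := by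
    rintro s ⟨hs0, hsx⟩
    set z := Function.update ((1 + s) • x) v ((1 + s) * x v - s)
    have hz : ∀ i ∈ G.verts, 0 ≤ z i := by
      intro i _
      rcases eq_or_ne i v with rfl | hi
      · simp only [z, Function.update_self]
        nlinarith [(hx.1 i).2]
      · simp only [z, Function.update_of_ne hi, Pi.smul_apply, smul_eq_mul]
        exact mul_nonneg (by linarith) (hx.1 i).1
    have hz_sum : ∑ i ∈ G.verts, z i = 1 := by
      rw [sum_update_of_mem hv, sdiff_singleton_eq_erase]
      simp only [Pi.smul_apply, smul_eq_mul, ← mul_sum, sum_erase_eq_sub hv, hx.2]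
      ring
    have hz_le := lagPoly_le_lag_of_nonneg hwf hz hz_sum
    rw [lagPoly_update_smul hu, ← hopt] at hz_le
    have : s * (3 * L) ≤ s * ((1 + s) ^ 2 * P) := by nlinarith [mul_nonneg (sq_nonneg s) hL]
    exact le_of_mul_le_mul_left this hs0
  have hlim : Tendsto (fun s : ℝ => (1 + s) ^ 2 * P) (𝓝[>] 0) (𝓝 P) := by
    refine tendsto_nhdsWithin_of_tendsto_nhds ?_
    have hcont : Continuous fun s : ℝ => (1 + s) ^ 2 * P := by fun_prop
    simpa using hcont.tendsto 0
  exact ge_of_tendsto hlim (eventually_of_mem (Ioc_mem_nhdsGT hxv) hbound)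

theorem two_mul_lagPolyPartial_le_adjForm {G : FinHypergraph} (hwf : G.IsWf)
    (hu : G.IsUniform 3) {x : ℕ → ℝ} (hx : ∀ i, 0 ≤ x i) (v : ℕ)
    [DecidableRel (linkGraph G v).Adj] :
    2 * lagPolyPartial G v x ≤ (linkGraph G v).adjForm (G.verts.erase v) x := by
  set S := G.verts.erase v
  set Ev := {e ∈ G.edges | v ∈ e}
  have hpairs : ∀ e ∈ Ev,
      ∑ p ∈ (e.erase v).offDiag, x p.1 * x p.2 = 2 * ∏ i ∈ e.erase v, x i := by
    intro e he
    obtain ⟨heE, hve⟩ := mem_filter.mp he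
    obtain ⟨a, b, hab, hab_eq⟩ := card_eq_two.mp (by rw [card_erase_of_mem hve, hu e heE])
    rw [hab_eq, offDiag_insert (by simpa using hab)]
    simp [hab, hab.symm, prod_pair hab]
    ring
  have heq : ∀ e ∈ Ev, ∀ p ∈ (e.erase v).offDiag, e = {v, p.1, p.2} := fun e he _ hp =>
    eq_insert_pair_of_mem_offDiag_erase (hu e (mem_filter.mp he).1) (mem_filter.mp he).2 hp
  have hdisj : (Ev : Set (Finset ℕ)).PairwiseDisjoint fun e => (e.erase v).offDiag :=
    fun e he f hf hef => disjoint_left.mpr fun p hpe hpf =>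
      hef ((heq e he p hpe).trans (heq f hf p hpf).symm)
  have hsub : Ev.biUnion (fun e => (e.erase v).offDiag)
      ⊆ {p ∈ S ×ˢ S | (linkGraph G v).Adj p.1 p.2} := by
    intro p hp
    obtain ⟨e, he, hpe⟩ := mem_biUnion.mp hp
    obtain ⟨h1, h2, hne⟩ := mem_offDiag.mp hpe
    have heS : e.erase v ⊆ S := erase_subset_erase v (hwf e (mem_filter.mp he).1)
    refine mem_filter.mpr ⟨mem_product.mpr ⟨heS h1, heS h2⟩, ?_⟩
    rw [linkGraph, SimpleGraph.fromRel_adj, ← heq e he p hpe]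
    exact ⟨hne, Or.inl (mem_filter.mp he).1⟩
  calc 2 * lagPolyPartial G v x = ∑ e ∈ Ev, ∑ p ∈ (e.erase v).offDiag, x p.1 * x p.2 := by
        rw [lagPolyPartial, mul_sum]
        exact (sum_congr rfl hpairs).symm
    _ = ∑ p ∈ Ev.biUnion (fun e => (e.erase v).offDiag), x p.1 * x p.2 :=
        (sum_biUnion hdisj).symm
    _ ≤ _ := sum_le_sum_of_subset_of_nonneg hsub fun p _ _ => mul_nonneg (hx _) (hx _)
    _ = _ := (SimpleGraph.adjForm_eq_sum_adj_pairs S x).symm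

theorem le_lag_completeG (k : ℕ) :
    (k * (k - 1) / (6 * (k + 1) ^ 2) : ℝ) ≤ lag (completeG (k + 1)) := by
  set u : ℕ → ℝ := fun _ => 1 / (k + 1)
  have hu : u ∈ simplex (completeG (k + 1)) := by
    refine ⟨fun _ => ⟨by positivity, div_le_one_of_le₀ (by linarith [k.cast_nonneg (α := ℝ)])
      (by positivity)⟩, ?_⟩
    simp [completeG, u]
    field_simp
  have hval : lagPoly (completeG (k + 1)) u = ((k + 1).choose 3 : ℝ) / (k + 1) ^ 3 := by
    rw [lagPoly, sum_congr rfl fun e he => by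
      rw [prod_const, (mem_powersetCard.mp he).2]]
    simp [completeG, div_eq_mul_inv]
  have hchoose : ((k + 1).choose 3 : ℝ) * 3 = (k + 1) * (k * (k - 1) / 2) := by
    rw [← Nat.cast_choose_two]
    exact_mod_cast (Nat.add_one_mul_choose_eq k 2).symm
  calc (k * (k - 1) / (6 * (k + 1) ^ 2) : ℝ) = ((k + 1).choose 3 : ℝ) / (k + 1) ^ 3 := by
        field_simp
        linear_combination (-2 : ℝ) * hchoose
    _ = lagPoly (completeG (k + 1)) u := hval.symm
    _ ≤ _ := lagPoly_le_lag hu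

/-- If `G` is a 3-graph with `λ(G) > λ(K_{k+1}³)`, `x` is an optimum weight
vector, and `v` is a vertex whose link graph has clique number at most `k`,
then `x v < 1/(k+1)`. -/
theorem stmt_7 (k : ℕ) (G : FinHypergraph) (hwf : G.IsWf) (hu : G.IsUniform 3)
    (hlag : lag (completeG (k + 1)) < lag G)
    (x : ℕ → ℝ) (hx : x ∈ simplex G) (hopt : lagPoly G x = lag G)
    (v : ℕ) (hv : v ∈ G.verts)
    (hclique : ∀ K : Finset ℕ, (linkGraph G v).IsClique ↑K → K.card ≤ k) :
    x v < 1 / ((k : ℝ) + 1) := by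
  classical
  rcases (hx.1 v).1.eq_or_lt with hxv | hxv
  · rw [← hxv]
    positivity
  have hk : (1 : ℝ) ≤ k := by exact_mod_cast hclique {v} (by simp)
  have hpartial := three_mul_lagPoly_le_lagPolyPartial hwf hu hx hopt hv hxv
  have hlink : 2 * lagPolyPartial G v x ≤ (1 - 1 / k) * (1 - x v) ^ 2 :=
    calc _ ≤ (linkGraph G v).adjForm (G.verts.erase v) x :=
          two_mul_lagPolyPartial_le_adjForm hwf hu (fun i => (hx.1 i).1) v
      _ ≤ (1 - 1 / k) * (∑ i ∈ G.verts.erase v, x i) ^ 2 :=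
          SimpleGraph.adjForm_le_of_forall_isClique_card_le hclique _ fun i _ => (hx.1 i).1
      _ = _ := by rw [sum_erase_eq_sub hv, hx.2]
  by_contra! hxv_ge
  have hcompl : 1 - x v ≤ k / (k + 1) := by
    rw [div_le_iff₀ (by positivity)] at hxv_ge
    rw [le_div_iff₀ (by positivity)]
    linarith
  have hG : 6 * lag G ≤ 6 * (k * (k - 1) / (6 * (k + 1) ^ 2)) :=
    calc 6 * lag G ≤ (1 - 1 / k) * (1 - x v) ^ 2 := by linarith
      _ ≤ (1 - 1 / k) * (k / (k + 1)) ^ 2 := by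
          gcongr
          · exact sub_nonneg.mpr (div_le_one_of_le₀ hk (by positivity))
          · linarith [(hx.1 v).2]
      _ = 6 * (k * (k - 1) / (6 * (k + 1) ^ 2)) := by
          field_simp
  linarith [le_lag_completeG k]
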